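/- arXiv:2110.15591 — 5 statements merged into one kernel-verified Lean document; each statement's English description precedes it below -/
import Mathlib

section
/- (Face characterization, case m₃ > m₂ = m₁ ≥ 2) Assume m₃ > m₂ = m₁ ≥ 2. Then for every nonempty subset F ⊆ S with F ≠ S, the convex hull of F is an extreme subset of the convex hull of S if and only if either (V₁ ⊄ F and V₂ ⊄ F) or V₁ ∪ V₂ ⊆ F. -/
/-!
Because the `n + 2` points of `S` span an `n`-dimensional space, their linear dependences form a
plane, spanned by `𝟙 V₁ - 𝟙 V₃` and `𝟙 V₂ - 𝟙 V₃`; as `m₁ = m₂ ≠ m₃`, every affine dependence is a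
multiple of `𝟙 V₁ - 𝟙 V₂`. Now `conv F` is a face as soon as every affine dependence that is
nonnegative off `F` vanishes off `F`, and for this one dependence that is the stated condition.
Conversely, a face `conv F` containing `V₁` contains the common centroid of `V₁` and `V₂`, hence
all of `V₂`; and since `V₁` and `V₂` both have at least two points, no point of `S` lies in the
convex hull of the others, so `V₂ ⊆ F`.
-/

open Finset Module Submodule

variable {E : Type*} [AddCommGroup E] [Module ℝ E]

def IsAffineDependence (S : Finset E) (c : E → ℝ) : Prop :=
  ∑ v ∈ S, c v • v = 0 ∧ ∑ v ∈ S, c v = 0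

/-- Every affine dependence of `S` is a multiple of `𝟙 V₁ - 𝟙 V₂`. -/
def AffineDependencesSpannedBy (S V₁ V₂ : Finset E) : Prop :=
  ∀ c, IsAffineDependence S c →
    ∃ a, (∀ v ∈ V₁, c v = a) ∧ (∀ v ∈ V₂, c v = -a) ∧ ∀ v ∈ S, v ∉ V₁ → v ∉ V₂ → c v = 0

theorem finrank_ker_linearCombination_add_finrank_span (S : Finset E) :
    finrank ℝ (LinearMap.ker (Fintype.linearCombination ℝ ((↑) : S → E))) +
      finrank ℝ (span ℝ (S : Set E)) = S.card := by
  have hrange : LinearMap.range (Fintype.linearCombination ℝ ((↑) : S → E)) = span ℝ S := by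
    rw [Fintype.range_linearCombination, Subtype.range_coe]
  have h := LinearMap.finrank_range_add_finrank_ker (Fintype.linearCombination ℝ ((↑) : S → E))
  rw [hrange, finrank_fintype_fun_eq_card, Fintype.card_coe] at h
  omega

theorem linearCombination_indicator_eq_sum [DecidableEq E] {S A : Finset E} (hA : A ⊆ S) :
    Fintype.linearCombination ℝ ((↑) : S → E) (fun i => if (i : E) ∈ A then 1 else 0) =
      ∑ v ∈ A, v := by
  simp only [Fintype.linearCombination_apply, ite_smul, one_smul, zero_smul]
  rw [sum_coe_sort S fun v => if v ∈ A then v else 0, sum_ite_mem, inter_eq_right.mpr hA]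

theorem exists_const_on_parts_of_sum_smul_eq_zero [DecidableEq E] {S V₁ V₂ V₃ : Finset E}
    (hcard : S.card = finrank ℝ (span ℝ (S : Set E)) + 2) (hunion : V₁ ∪ V₂ ∪ V₃ = S)
    (h₁₂ : Disjoint V₁ V₂) (h₁₃ : Disjoint V₁ V₃) (h₂₃ : Disjoint V₂ V₃)
    (hne₁ : V₁.Nonempty) (hne₂ : V₂.Nonempty)
    (hsum₁ : ∑ v ∈ V₁, v = ∑ v ∈ V₃, v) (hsum₂ : ∑ v ∈ V₂, v = ∑ v ∈ V₃, v)
    {c : E → ℝ} (hc : ∑ v ∈ S, c v • v = 0) :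
    ∃ p q, (∀ v ∈ V₁, c v = p) ∧ (∀ v ∈ V₂, c v = q) ∧ ∀ v ∈ V₃, c v = -(p + q) := by
  have hrank := finrank_ker_linearCombination_add_finrank_span S
  set T := Fintype.linearCombination ℝ ((↑) : S → E)
  let ind (A : Finset E) : S → ℝ := fun i => if (i : E) ∈ A then 1 else 0
  have hV₁ : V₁ ⊆ S := hunion ▸ subset_union_left.trans subset_union_left
  have hV₂ : V₂ ⊆ S := hunion ▸ subset_union_right.trans subset_union_left
  have hV₃ : V₃ ⊆ S := hunion ▸ subset_union_right
  set e₁ := ind V₁ - ind V₃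
  set e₂ := ind V₂ - ind V₃
  have hindep : LinearIndependent ℝ ![e₁, e₂] := by
    obtain ⟨w₁, hw₁⟩ := hne₁
    obtain ⟨w₂, hw₂⟩ := hne₂
    refine LinearIndependent.pair_iff.mpr fun s t hst => ⟨?_, ?_⟩
    · simpa [e₁, e₂, ind, hw₁, disjoint_left.mp h₁₂ hw₁, disjoint_left.mp h₁₃ hw₁] using
        congrFun hst ⟨w₁, hV₁ hw₁⟩
    · simpa [e₁, e₂, ind, hw₂, disjoint_right.mp h₁₂ hw₂, disjoint_left.mp h₂₃ hw₂] using
        congrFun hst ⟨w₂, hV₂ hw₂⟩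
  have hspan : span ℝ (Set.range ![e₁, e₂]) = LinearMap.ker T := by
    refine eq_of_le_of_finrank_le (span_le.mpr ?_) ?_
    · rintro _ ⟨i, rfl⟩
      fin_cases i <;>
        simp [T, e₁, e₂, ind, linearCombination_indicator_eq_sum, hV₁, hV₂, hV₃, hsum₁, hsum₂]
    · rw [finrank_span_eq_card hindep, Fintype.card_fin]
      omega
  have hcT : (fun i : S => c i) ∈ LinearMap.ker T := by
    rw [LinearMap.mem_ker, ← hc]
    exact sum_coe_sort S fun v => c v • v
  rw [← hspan, Matrix.range_cons_cons_empty, mem_span_pair] at hcT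
  obtain ⟨p, q, hpq⟩ := hcT
  refine ⟨p, q, fun v hv => ?_, fun v hv => ?_, fun v hv => ?_⟩
  · simpa [e₁, e₂, ind, hv, disjoint_left.mp h₁₂ hv, disjoint_left.mp h₁₃ hv] using
      (congrFun hpq ⟨v, hV₁ hv⟩).symm
  · simpa [e₁, e₂, ind, hv, disjoint_right.mp h₁₂ hv, disjoint_left.mp h₂₃ hv] using
      (congrFun hpq ⟨v, hV₂ hv⟩).symm
  · have := congrFun hpq ⟨v, hV₃ hv⟩
    simp [e₁, e₂, ind, hv, disjoint_right.mp h₁₃ hv, disjoint_right.mp h₂₃ hv] at this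
    linarith

theorem affineDependencesSpannedBy_of_partition [DecidableEq E] {S V₁ V₂ V₃ : Finset E}
    (hcard : S.card = finrank ℝ (span ℝ (S : Set E)) + 2) (hunion : V₁ ∪ V₂ ∪ V₃ = S)
    (h₁₂ : Disjoint V₁ V₂) (h₁₃ : Disjoint V₁ V₃) (h₂₃ : Disjoint V₂ V₃)
    (hne₁ : V₁.Nonempty) (hne₂ : V₂.Nonempty)
    (hsum₁ : ∑ v ∈ V₁, v = ∑ v ∈ V₃, v) (hsum₂ : ∑ v ∈ V₂, v = ∑ v ∈ V₃, v)
    (hcard₁₂ : V₁.card = V₂.card) (hcard₂₃ : V₂.card ≠ V₃.card) :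
    AffineDependencesSpannedBy S V₁ V₂ := by
  rintro c ⟨hlin, haff⟩
  obtain ⟨p, q, hp, hq, hpq⟩ := exists_const_on_parts_of_sum_smul_eq_zero hcard hunion h₁₂ h₁₃
    h₂₃ hne₁ hne₂ hsum₁ hsum₂ hlin
  have hsum : ∑ v ∈ S, c v = V₁.card * p + V₂.card * q + V₃.card * -(p + q) := by
    rw [← hunion, sum_union (disjoint_union_left.mpr ⟨h₁₃, h₂₃⟩), sum_union h₁₂,
      sum_congr rfl hp, sum_congr rfl hq, sum_congr rfl hpq]
    simp only [sum_const, nsmul_eq_mul]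
  have hpq_zero : p + q = 0 := by
    have hne : (V₂.card : ℝ) - V₃.card ≠ 0 := sub_ne_zero.mpr (by exact_mod_cast hcard₂₃)
    refine (mul_eq_zero.mp ?_).resolve_left hne
    rw [haff, hcard₁₂] at hsum
    linarith
  refine ⟨p, hp, fun v hv => by linarith [hq v hv], fun v hv hv₁ hv₂ => ?_⟩
  have hv₃ : v ∈ V₃ := by simpa [← hunion, hv₁, hv₂] using hv
  rw [hpq v hv₃, hpq_zero, neg_zero]

theorem mem_convexHull_iff_exists_weights_of_subset {S F : Finset E} (hFS : F ⊆ S) {x : E} :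
    x ∈ convexHull ℝ (F : Set E) ↔ ∃ w : E → ℝ, (∀ y ∈ S, 0 ≤ w y) ∧
      (∀ y ∈ S, y ∉ F → w y = 0) ∧ ∑ y ∈ S, w y = 1 ∧ ∑ y ∈ S, w y • y = x := by
  classical
  rw [Finset.mem_convexHull']
  constructor
  · rintro ⟨w, hw₀, hw₁, hwx⟩
    refine ⟨(F : Set E).indicator w, fun y _ => Set.indicator_nonneg hw₀ y,
      fun y _ hy => Set.indicator_of_notMem hy w, ?_, ?_⟩
    · rw [sum_indicator_subset _ hFS, hw₁]
    · rw [← hwx, ← sum_indicator_subset _ hFS]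
      exact sum_congr rfl fun y _ => (Set.indicator_smul_apply_left _ w (fun y => y) y).symm
  · rintro ⟨w, hw₀, hwF, hw₁, hwx⟩
    refine ⟨w, fun y hy => hw₀ y (hFS hy), ?_, ?_⟩
    · rwa [sum_subset hFS fun y hy hyF => hwF y hy hyF]
    · rwa [sum_subset hFS fun y hy hyF => by rw [hwF y hy hyF, zero_smul]]

theorem isExtreme_convexHull_of_affineDependence {S F : Finset E} (hFS : F ⊆ S)
    (h : ∀ c, IsAffineDependence S c → (∀ v ∈ S, v ∉ F → 0 ≤ c v) → ∀ v ∈ S, v ∉ F → c v = 0) :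
    IsExtreme ℝ (convexHull ℝ (S : Set E)) (convexHull ℝ (F : Set E)) := by
  refine ⟨convexHull_mono (by exact_mod_cast hFS), ?_⟩
  rintro x₁ hx₁ x₂ hx₂ x hx ⟨a, b, ha, hb, hab, rfl⟩
  obtain ⟨α, hα₀, hα₁, hαx⟩ := Finset.mem_convexHull'.mp hx₁
  obtain ⟨β, hβ₀, hβ₁, hβx⟩ := Finset.mem_convexHull'.mp hx₂
  obtain ⟨l, -, hlF, hl₁, hlx⟩ := (mem_convexHull_iff_exists_weights_of_subset hFS).mp hx
  have hdep : IsAffineDependence S (a • α + b • β - l) := by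
    constructor
    · simp [sub_smul, add_smul, mul_smul, sum_sub_distrib, sum_add_distrib, ← smul_sum, hαx,
        hβx, hlx]
    · simp [sum_sub_distrib, sum_add_distrib, ← mul_sum, hα₁, hβ₁, hl₁, hab]
  have hzero := h _ hdep fun v hv hvF => by
    simp only [Pi.sub_apply, Pi.add_apply, Pi.smul_apply, smul_eq_mul, hlF v hv hvF, sub_zero]
    have := hα₀ v hv
    have := hβ₀ v hv
    positivity
  refine (mem_convexHull_iff_exists_weights_of_subset hFS).mpr
    ⟨α, hα₀, fun v hv hvF => ?_, hα₁, hαx⟩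
  have := hzero v hv hvF
  simp only [Pi.sub_apply, Pi.add_apply, Pi.smul_apply, smul_eq_mul, hlF v hv hvF,
    sub_zero] at this
  nlinarith [hα₀ v hv, hβ₀ v hv]

theorem exists_affineDependence_of_mem_convexHull [DecidableEq E] {S F : Finset E} (hFS : F ⊆ S)
    {w : E} (hwS : w ∈ S) (hwF : w ∉ F) (hw : w ∈ convexHull ℝ (F : Set E)) :
    ∃ c, IsAffineDependence S c ∧ c w = -1 ∧ ∀ v ∈ S, v ≠ w → 0 ≤ c v := by
  obtain ⟨l, hl₀, hlF, hl₁, hlw⟩ := (mem_convexHull_iff_exists_weights_of_subset hFS).mp hw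
  refine ⟨fun v => l v - if v = w then 1 else 0, ⟨?_, ?_⟩, ?_, fun v hv hvw => ?_⟩
  · simp [sub_smul, sum_sub_distrib, hlw, hwS]
  · simp [sum_sub_distrib, hl₁, hwS]
  · simp [hlF w hwS hwF]
  · simpa [hvw] using hl₀ v hv

theorem IsExtreme.mem_of_centerMass_mem {ι : Type*} {A C : Set E} (hAC : IsExtreme ℝ A C)
    (hA : Convex ℝ A) {t : Finset ι} {w : ι → ℝ} {z : ι → E} (hw : ∀ i ∈ t, 0 < w i)
    (hz : ∀ i ∈ t, z i ∈ A) (hC : t.centerMass w z ∈ C) {i : ι} (hi : i ∈ t) : z i ∈ C := by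
  classical
  rcases (t.erase i).eq_empty_or_nonempty with h | h
  · rw [← insert_erase hi, h, insert_empty, centerMass_singleton i z (hw i hi).ne'] at hC
    exact hC
  have hpos : 0 < ∑ j ∈ t.erase i, w j := sum_pos (fun j hj => hw j (mem_of_mem_erase hj)) h
  rw [← insert_erase hi, centerMass_insert i _ z (notMem_erase i t) hpos.ne'] at hC
  have hrest : (t.erase i).centerMass w z ∈ A :=
    hA.centerMass_mem (fun j hj => (hw j (mem_of_mem_erase hj)).le) hpos
      (fun j hj => hz j (mem_of_mem_erase hj))
  refine hAC.left_mem_of_mem_openSegment (hz i hi) hrest hC ⟨_, _, ?_, ?_, ?_, rfl⟩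
  · exact div_pos (hw i hi) (add_pos (hw i hi) hpos)
  · exact div_pos hpos (add_pos (hw i hi) hpos)
  · rw [← add_div, div_self (add_pos (hw i hi) hpos).ne']

theorem subset_convexHull_of_isExtreme {S F A B : Finset E}
    (hext : IsExtreme ℝ (convexHull ℝ (S : Set E)) (convexHull ℝ (F : Set E)))
    (hAF : A ⊆ F) (hBS : B ⊆ S) (hsum : ∑ v ∈ A, v = ∑ v ∈ B, v) (hcard : A.card = B.card) :
    (B : Set E) ⊆ convexHull ℝ (F : Set E) := by
  intro v hv
  have hA : 0 < ∑ _ ∈ A, (1 : ℝ) := by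
    simpa [hcard] using card_pos.mpr ⟨v, hv⟩
  have hcentroid : B.centerMass (fun _ => (1 : ℝ)) id = A.centerMass (fun _ => (1 : ℝ)) id := by
    simp [centerMass, hsum, hcard]
  refine hext.mem_of_centerMass_mem (z := id) (convex_convexHull ℝ _) (fun _ _ => one_pos)
    (fun u hu => subset_convexHull ℝ _ (hBS hu)) ?_ hv
  rw [hcentroid]
  exact convexHull_mono (by exact_mod_cast hAF)
    (A.centerMass_mem_convexHull (fun _ _ => zero_le_one) hA fun u hu => mem_coe.mpr hu)

namespace AffineDependencesSpannedBy

variable {S V₁ V₂ F : Finset E}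

theorem mem_of_mem_convexHull (hS : AffineDependencesSpannedBy S V₁ V₂)
    (hV₁ : V₁ ⊆ S) (hV₂ : V₂ ⊆ S) (h₁ : 2 ≤ V₁.card) (h₂ : 2 ≤ V₂.card) (hFS : F ⊆ S) {w : E}
    (hwS : w ∈ S) (hw : w ∈ convexHull ℝ (F : Set E)) : w ∈ F := by
  classical
  by_contra hwF
  obtain ⟨c, hc, hcw, hc₀⟩ := exists_affineDependence_of_mem_convexHull hFS hwS hwF hw
  obtain ⟨a, ha₁, ha₂, ha₀⟩ := hS c hc
  by_cases hw₁ : w ∈ V₁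
  · obtain ⟨u, hu, huw⟩ := exists_mem_ne h₁ w
    linarith [hc₀ u (hV₁ hu) huw, ha₁ u hu, ha₁ w hw₁]
  by_cases hw₂ : w ∈ V₂
  · obtain ⟨u, hu, huw⟩ := exists_mem_ne h₂ w
    linarith [hc₀ u (hV₂ hu) huw, ha₂ u hu, ha₂ w hw₂]
  linarith [ha₀ w hwS hw₁ hw₂]

theorem isExtreme_convexHull [DecidableEq E] (hS : AffineDependencesSpannedBy S V₁ V₂)
    (hV₁ : V₁ ⊆ S) (hV₂ : V₂ ⊆ S) (hFS : F ⊆ S) (hF : (¬ V₁ ⊆ F ∧ ¬ V₂ ⊆ F) ∨ V₁ ∪ V₂ ⊆ F) :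
    IsExtreme ℝ (convexHull ℝ (S : Set E)) (convexHull ℝ (F : Set E)) := by
  refine isExtreme_convexHull_of_affineDependence hFS fun c hc hc₀ v hv hvF => ?_
  obtain ⟨a, ha₁, ha₂, ha₀⟩ := hS c hc
  rcases hF with ⟨h₁, h₂⟩ | h
  · obtain ⟨u₁, hu₁, hu₁F⟩ := not_subset.mp h₁
    obtain ⟨u₂, hu₂, hu₂F⟩ := not_subset.mp h₂
    have ha : a = 0 := by
      linarith [hc₀ u₁ (hV₁ hu₁) hu₁F, hc₀ u₂ (hV₂ hu₂) hu₂F, ha₁ u₁ hu₁, ha₂ u₂ hu₂]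
    by_cases hv₁ : v ∈ V₁
    · rw [ha₁ v hv₁, ha]
    by_cases hv₂ : v ∈ V₂
    · rw [ha₂ v hv₂, ha, neg_zero]
    exact ha₀ v hv hv₁ hv₂
  · exact ha₀ v hv (fun h' => hvF (h (mem_union_left _ h')))
      (fun h' => hvF (h (mem_union_right _ h')))

end AffineDependencesSpannedBy

theorem stmt_13_general
    (n : ℕ)
    (S V1 V2 V3 : Finset (Fin (2 * n) → ℝ))
    (hScard : S.card = n + 2)
    (hunion : V1 ∪ V2 ∪ V3 = S)
    (hd12 : Disjoint V1 V2) (hd13 : Disjoint V1 V3) (hd23 : Disjoint V2 V3)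
    (hsum1 : ∑ v ∈ V1, v = fun _ => (1 : ℝ))
    (hsum2 : ∑ v ∈ V2, v = fun _ => (1 : ℝ))
    (hsum3 : ∑ v ∈ V3, v = fun _ => (1 : ℝ))
    (hspan : Module.finrank ℝ (Submodule.span ℝ (S : Set (Fin (2 * n) → ℝ))) = n)
    (hm : 2 ≤ V1.card) (h12 : V1.card = V2.card) (h23 : V2.card < V3.card)
    : ∀ F ⊆ S, F.Nonempty → F ≠ S →
      (IsExtreme ℝ (convexHull ℝ (S : Set (Fin (2 * n) → ℝ)))
          (convexHull ℝ (F : Set (Fin (2 * n) → ℝ))) ↔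
        ((¬ V1 ⊆ F ∧ ¬ V2 ⊆ F) ∨ V1 ∪ V2 ⊆ F)) := by
  intro F hFS _ _
  have hV₁ : V1 ⊆ S := hunion ▸ subset_union_left.trans subset_union_left
  have hV₂ : V2 ⊆ S := hunion ▸ subset_union_right.trans subset_union_left
  have hm₂ : 2 ≤ V2.card := h12 ▸ hm
  have hS : AffineDependencesSpannedBy S V1 V2 :=
    affineDependencesSpannedBy_of_partition (by rw [hScard, hspan]) hunion hd12 hd13 hd23
      (card_pos.mp (by omega)) (card_pos.mp (by omega)) (hsum1.trans hsum3.symm)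
      (hsum2.trans hsum3.symm) h12 h23.ne
  refine ⟨fun hext => ?_, hS.isExtreme_convexHull hV₁ hV₂ hFS⟩
  have hvert {w} (hwS : w ∈ S) (hw : w ∈ convexHull ℝ (F : Set (Fin (2 * n) → ℝ))) : w ∈ F :=
    hS.mem_of_mem_convexHull hV₁ hV₂ hm hm₂ hFS hwS hw
  have h₁₂ (h : V1 ⊆ F) : V2 ⊆ F := fun v hv => hvert (hV₂ hv)
    (subset_convexHull_of_isExtreme hext h hV₂ (hsum1.trans hsum2.symm) h12 hv)
  have h₂₁ (h : V2 ⊆ F) : V1 ⊆ F := fun v hv => hvert (hV₁ hv)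
    (subset_convexHull_of_isExtreme hext h hV₁ (hsum2.trans hsum1.symm) h12.symm hv)
  by_cases h : V1 ⊆ F
  · exact Or.inr (union_subset h (h₁₂ h))
  · exact Or.inl ⟨h, fun h₂ => h (h₂₁ h₂)⟩

theorem stmt_13
    (n : ℕ) (hn : 0 < n)
    (S V1 V2 V3 : Finset (Fin (2 * n) → ℝ))
    (h01 : ∀ v ∈ S, ∀ i, v i = 0 ∨ v i = 1)
    (hScard : S.card = n + 2)
    (hunion : V1 ∪ V2 ∪ V3 = S)
    (hd12 : Disjoint V1 V2) (hd13 : Disjoint V1 V3) (hd23 : Disjoint V2 V3)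
    (hne1 : V1.Nonempty) (hne2 : V2.Nonempty) (hne3 : V3.Nonempty)
    (hsum1 : ∑ v ∈ V1, v = fun _ => (1 : ℝ))
    (hsum2 : ∑ v ∈ V2, v = fun _ => (1 : ℝ))
    (hsum3 : ∑ v ∈ V3, v = fun _ => (1 : ℝ))
    (hspan : Module.finrank ℝ (Submodule.span ℝ (S : Set (Fin (2 * n) → ℝ))) = n)
    (hm : 2 ≤ V1.card) (h12 : V1.card = V2.card) (h23 : V2.card < V3.card)
    : ∀ F ⊆ S, F.Nonempty → F ≠ S →
      (IsExtreme ℝ (convexHull ℝ (S : Set (Fin (2 * n) → ℝ)))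
          (convexHull ℝ (F : Set (Fin (2 * n) → ℝ))) ↔
        ((¬ V1 ⊆ F ∧ ¬ V2 ⊆ F) ∨ V1 ∪ V2 ⊆ F)) :=
  stmt_13_general n S V1 V2 V3 hScard hunion hd12 hd13 hd23 hsum1 hsum2 hsum3 hspan hm h12 h23
end

section
/- (Pyramid structure, case m₃ > m₂ = m₁ ≥ 2) Assume m₃ > m₂ = m₁ ≥ 2. Then for every v ∈ V₃, the point v does not belong to the affine span of S ∖ {v}; hence conv(S) is an m₃-fold pyramid whose apexes are the points of V₃. -/
/-!
The linear relations among the points of `S` form the kernel of `c ↦ ∑ₓ c x • x` on `k^S`, of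
dimension `#S - dim span S ≤ 2`. Since the three blocks have equal sums, `𝟙_{V₁} - 𝟙_{V₂}` and
`𝟙_{V₂} - 𝟙_{V₃}` are two independent relations, so they span it. If `v ∈ V₃` lay in the affine
span of the other points, there would be a relation `a (𝟙_{V₁} - 𝟙_{V₂}) + b (𝟙_{V₂} - 𝟙_{V₃})`
with coefficient `1` at `v`, forcing `b = -1`, and total weight `0`, forcing
`b (#V₂ - #V₃) = 0`, i.e. `b = 0` because `#V₂ ≠ #V₃`.
-/

open Finset Module

theorem Fintype.linearCombination_finset_coe {k E : Type*} [Semiring k] [AddCommMonoid E]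
    [Module k E] (S : Finset E) (f : E → k) :
    Fintype.linearCombination k ((↑) : S → E) (fun i => f i) = ∑ x ∈ S, f x • x := by
  rw [Fintype.linearCombination_apply]
  exact sum_coe_sort S fun x => f x • x

section BlockRelation

variable {k E : Type*} [Ring k] [DecidableEq E]

def blockRelation (S A B : Finset E) : S → k :=
  fun i => (if (i : E) ∈ A then 1 else 0) - if (i : E) ∈ B then 1 else 0

variable {S A B : Finset E}

theorem sum_blockRelation (hA : A ⊆ S) (hB : B ⊆ S) :
    ∑ i, blockRelation (k := k) S A B i = #A - #B := by
  unfold blockRelation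
  rw [sum_coe_sort S fun x => (if x ∈ A then (1 : k) else 0) - if x ∈ B then 1 else 0]
  simp [sum_sub_distrib, inter_eq_right.mpr hA, inter_eq_right.mpr hB]

theorem blockRelation_mem_ker [AddCommGroup E] [Module k E] (hA : A ⊆ S) (hB : B ⊆ S)
    (h : ∑ x ∈ A, x = ∑ x ∈ B, x) :
    blockRelation (k := k) S A B ∈ LinearMap.ker (Fintype.linearCombination k ((↑) : S → E)) := by
  unfold blockRelation
  rw [LinearMap.mem_ker, Fintype.linearCombination_finset_coe S
    fun x => (if x ∈ A then (1 : k) else 0) - if x ∈ B then 1 else 0]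
  simp [sub_smul, sum_sub_distrib, inter_eq_right.mpr hA, inter_eq_right.mpr hB, h]

end BlockRelation

section Relations

variable {k E : Type*} [Field k] [AddCommGroup E] [Module k E]

theorem Submodule.eq_span_pair_of_finrank_le_two {K : Submodule k E} [FiniteDimensional k K]
    (hK : finrank k K ≤ 2) {x y : E} (hx : x ∈ K) (hy : y ∈ K)
    (hxy : LinearIndependent k ![x, y]) : K = span k {x, y} := by
  refine (Submodule.eq_of_le_of_finrank_le (span_le.mpr ?_) ?_).symm
  · rintro z (rfl | rfl | _) <;> assumption
  · have := finrank_span_eq_card hxy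
    rw [Matrix.range_cons, Matrix.range_cons, Matrix.range_empty, Set.union_empty,
      Set.singleton_union] at this
    simpa [this] using hK

theorem finrank_ker_linearCombination_finset_coe_add (S : Finset E) :
    finrank k (LinearMap.ker (Fintype.linearCombination k ((↑) : S → E))) +
      finrank k (Submodule.span k (S : Set E)) = #S := by
  have h := (Fintype.linearCombination k ((↑) : S → E)).finrank_range_add_finrank_ker
  rwa [Fintype.range_linearCombination, Subtype.range_coe_subtype, setOfPred_mem,
    finrank_fintype_fun_eq_card, Fintype.card_coe, add_comm] at h

theorem exists_affine_relation_of_mem_affineSpan_sdiff [DecidableEq E] {S : Finset E} {v : E}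
    (hv : v ∈ S) (h : v ∈ affineSpan k ((S \ {v} : Finset E) : Set E)) :
    ∃ c ∈ LinearMap.ker (Fintype.linearCombination k ((↑) : S → E)),
      ∑ i, c i = 0 ∧ c ⟨v, hv⟩ = 1 := by
  rw [← Set.image_id ((S \ {v} : Finset E) : Set E)] at h
  obtain ⟨T, w, hTS, hw, hvw⟩ := eq_affineCombination_of_mem_affineSpan_image h
  rw [T.affineCombination_eq_linear_combination _ _ hw] at hvw
  have hT : T ⊆ S := fun x hx => (mem_sdiff.mp (hTS hx)).1
  have hvT : v ∉ T := fun hx => (mem_sdiff.mp (hTS hx)).2 (mem_singleton_self v)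
  let c : E → k := fun x => (if x = v then 1 else 0) - if x ∈ T then w x else 0
  refine ⟨fun i => c i, ?_, ?_, by simp [c, hvT]⟩
  · rw [LinearMap.mem_ker, Fintype.linearCombination_finset_coe]
    simp only [c, sub_smul, ite_smul, one_smul, zero_smul, sum_sub_distrib, sum_ite_eq' S v,
      if_pos hv, ← sum_filter, filter_mem_eq_inter, inter_eq_right.mpr hT]
    simpa [sub_eq_zero] using hvw
  · rw [sum_coe_sort S c]
    simp [c, sum_sub_distrib, hv, inter_eq_right.mpr hT, hw]

theorem notMem_affineSpan_sdiff_of_three_blocks [DecidableEq E] [CharZero k]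
    {S V₁ V₂ V₃ : Finset E} (hunion : V₁ ∪ V₂ ∪ V₃ = S)
    (hd₁₂ : Disjoint V₁ V₂) (hd₁₃ : Disjoint V₁ V₃) (hd₂₃ : Disjoint V₂ V₃) (hne : V₁.Nonempty)
    (hsum₁₂ : ∑ x ∈ V₁, x = ∑ x ∈ V₂, x) (hsum₂₃ : ∑ x ∈ V₂, x = ∑ x ∈ V₃, x)
    (hrank : #S ≤ finrank k (Submodule.span k (S : Set E)) + 2)
    (hcard₁₂ : #V₁ = #V₂) (hcard₂₃ : #V₂ ≠ #V₃) :
    ∀ v ∈ V₃, v ∉ affineSpan k ((S \ {v} : Finset E) : Set E) := by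
  intro v hv hmem
  have hV₁ : V₁ ⊆ S := hunion ▸ subset_union_left.trans subset_union_left
  have hV₂ : V₂ ⊆ S := hunion ▸ subset_union_right.trans subset_union_left
  have hV₃ : V₃ ⊆ S := hunion ▸ subset_union_right
  obtain ⟨c, hc, hc_sum, hc_v⟩ := exists_affine_relation_of_mem_affineSpan_sdiff (hV₃ hv) hmem
  have hK : finrank k (LinearMap.ker (Fintype.linearCombination k ((↑) : S → E))) ≤ 2 := by
    have := finrank_ker_linearCombination_finset_coe_add (k := k) S
    omega
  obtain ⟨u, hu⟩ := hne
  have hli : LinearIndependent k ![blockRelation (k := k) S V₁ V₂, blockRelation S V₂ V₃] := by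
    rw [LinearIndependent.pair_iff]
    intro s t hst
    have hu' := congrFun hst ⟨u, hV₁ hu⟩
    have hv' := congrFun hst ⟨v, hV₃ hv⟩
    exact ⟨by simpa [blockRelation, hu, disjoint_left.mp hd₁₂ hu, disjoint_left.mp hd₁₃ hu]
        using hu',
      by simpa [blockRelation, hv, disjoint_right.mp hd₁₃ hv, disjoint_right.mp hd₂₃ hv]
        using hv'⟩
  rw [Submodule.eq_span_pair_of_finrank_le_two hK (blockRelation_mem_ker hV₁ hV₂ hsum₁₂)
    (blockRelation_mem_ker hV₂ hV₃ hsum₂₃) hli, Submodule.mem_span_pair] at hc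
  obtain ⟨a, b, rfl⟩ := hc
  have hb : b = -1 := by
    simpa [blockRelation, hv, disjoint_right.mp hd₁₃ hv, disjoint_right.mp hd₂₃ hv,
      neg_eq_iff_eq_neg] using hc_v
  simp only [Pi.add_apply, Pi.smul_apply, smul_eq_mul, sum_add_distrib, ← mul_sum,
    sum_blockRelation hV₁ hV₂, sum_blockRelation hV₂ hV₃] at hc_sum
  rw [hcard₁₂, hb] at hc_sum
  exact hcard₂₃ (by simpa [sub_eq_zero, eq_comm] using hc_sum)

end Relations

theorem stmt_14_general
    (n : ℕ)
    (S V1 V2 V3 : Finset (Fin (2 * n) → ℝ))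
    (hScard : S.card = n + 2)
    (hunion : V1 ∪ V2 ∪ V3 = S)
    (hd12 : Disjoint V1 V2) (hd13 : Disjoint V1 V3) (hd23 : Disjoint V2 V3)
    (hne1 : V1.Nonempty)
    (hsum1 : ∑ v ∈ V1, v = fun _ => (1 : ℝ))
    (hsum2 : ∑ v ∈ V2, v = fun _ => (1 : ℝ))
    (hsum3 : ∑ v ∈ V3, v = fun _ => (1 : ℝ))
    (hspan : Module.finrank ℝ (Submodule.span ℝ (S : Set (Fin (2 * n) → ℝ))) = n)
    (h12 : V1.card = V2.card) (h23 : V2.card < V3.card)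
    : ∀ v ∈ V3, v ∉ affineSpan ℝ ((S \ {v} : Finset (Fin (2 * n) → ℝ)) : Set (Fin (2 * n) → ℝ)) :=
  notMem_affineSpan_sdiff_of_three_blocks hunion hd12 hd13 hd23 hne1 (hsum1.trans hsum2.symm)
    (hsum2.trans hsum3.symm) (by rw [hspan, hScard]) h12 h23.ne

theorem stmt_14
    (n : ℕ) (hn : 0 < n)
    (S V1 V2 V3 : Finset (Fin (2 * n) → ℝ))
    (h01 : ∀ v ∈ S, ∀ i, v i = 0 ∨ v i = 1)
    (hScard : S.card = n + 2)
    (hunion : V1 ∪ V2 ∪ V3 = S)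
    (hd12 : Disjoint V1 V2) (hd13 : Disjoint V1 V3) (hd23 : Disjoint V2 V3)
    (hne1 : V1.Nonempty) (hne2 : V2.Nonempty) (hne3 : V3.Nonempty)
    (hsum1 : ∑ v ∈ V1, v = fun _ => (1 : ℝ))
    (hsum2 : ∑ v ∈ V2, v = fun _ => (1 : ℝ))
    (hsum3 : ∑ v ∈ V3, v = fun _ => (1 : ℝ))
    (hspan : Module.finrank ℝ (Submodule.span ℝ (S : Set (Fin (2 * n) → ℝ))) = n)
    (hm : 2 ≤ V1.card) (h12 : V1.card = V2.card) (h23 : V2.card < V3.card)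
    : ∀ v ∈ V3, v ∉ affineSpan ℝ ((S \ {v} : Finset (Fin (2 * n) → ℝ)) : Set (Fin (2 * n) → ℝ)) :=
  stmt_14_general n S V1 V2 V3 hScard hunion hd12 hd13 hd23 hne1 hsum1 hsum2 hsum3 hspan h12 h23
end

section
/- (Face characterization, case m₁ = m₂ = m₃ ≥ 2) Assume m₁ = m₂ = m₃ ≥ 2. Then for every nonempty subset F ⊆ S, the convex hull of F is an extreme subset of the convex hull of S with F ≠ S if and only if V₁ ⊄ F, V₂ ⊄ F and V₃ ⊄ F. -/
/-!
The partition of `S` is encoded by a labelling `cls : E → ι` whose fibers in `S` are the classes.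

Since all fibers have the same sum and `span S` has dimension `#S + 1 - #ι`, a function
`g : E → 𝕜` agrees on `S` with a linear functional as soon as its sums over the fibers agree.
Such functionals expose `conv F` for every `F` that misses a point of each fiber (take `g = 0` on
`F` and positive off `F`), and show that every point of `S` is a vertex when all fibers have at
least two points. Conversely, if all fibers also have the same size, they share their centroid,
which lies in the relative interior of the hull of every fiber; so a face containing one fiber
contains every point of `S`, all of which are vertices, and is therefore `conv S` itself.
-/

open Finset Module Submodule

theorem card_filter_eq_section {α ι : Type*} [Fintype ι] [DecidableEq ι] [DecidableEq α]
    {S : Finset α} {cls : α → ι} {a : ι → α} (haS : ∀ i, a i ∈ S) (hcls : ∀ i, cls (a i) = i)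
    (i₀ : ι) :
    #{v ∈ S | cls v ≠ i₀ ∧ v = a (cls v)} = Fintype.card ι - 1 := by
  have : {v ∈ S | cls v ≠ i₀ ∧ v = a (cls v)} = (univ.erase i₀).image a := by
    ext v
    simp only [mem_filter, mem_image, mem_erase, mem_univ, and_true]
    constructor
    · rintro ⟨-, hv, hva⟩
      exact ⟨cls v, hv, hva.symm⟩
    · rintro ⟨i, hi, rfl⟩
      exact ⟨haS i, by rwa [hcls], by rw [hcls]⟩
  rw [this, card_image_of_injective _ (Function.LeftInverse.injective hcls),
    card_erase_of_mem (mem_univ i₀), card_univ]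

section LinearAlgebra

variable {K E V : Type*} [Field K] [AddCommGroup E] [Module K E] [AddCommGroup V] [Module K V]

theorem LinearIndependent.exists_linearMap_apply_eq {ι : Type*} [Fintype ι] {v : ι → E}
    (hv : LinearIndependent K v) (g : ι → V) : ∃ φ : E →ₗ[K] V, ∀ i, φ (v i) = g i := by
  classical
  obtain ⟨h, hh⟩ := LinearMap.exists_leftInverse_of_injective (Fintype.linearCombination K v)
    (LinearMap.ker_eq_bot.2 hv.fintypeLinearCombination_injective)
  refine ⟨Fintype.linearCombination K g ∘ₗ h, fun i => ?_⟩
  have : h (v i) = Pi.single i 1 := by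
    simpa [Fintype.linearCombination_apply_single] using LinearMap.congr_fun hh (Pi.single i 1)
  simp [this, Fintype.linearCombination_apply_single]

theorem exists_linearMap_eq_of_card_le_finrank_span {T : Finset E}
    (hT : #T ≤ finrank K (span K (T : Set E))) (g : E → V) :
    ∃ φ : E →ₗ[K] V, ∀ v ∈ T, φ v = g v := by
  have hT_indep : LinearIndependent K ((↑) : T → E) := by
    rwa [linearIndependent_iff_card_le_finrank_span, Set.finrank, Subtype.range_coe_subtype,
      setOfPred_mem, Fintype.card_coe]
  obtain ⟨φ, hφ⟩ := hT_indep.exists_linearMap_apply_eq fun v => g v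
  exact ⟨φ, fun v hv => hφ ⟨v, hv⟩⟩

variable {ι : Type*} [Fintype ι]

theorem nonempty_of_finrank_span_add_card_eq {S : Finset E}
    (hrank : finrank K (span K (S : Set E)) + Fintype.card ι = #S + 1) : Nonempty ι := by
  rw [← Fintype.card_pos_iff]
  have : finrank K (span K (S : Set E)) ≤ #S := finrank_span_finset_le_card S
  omega

variable [DecidableEq ι]

theorem exists_linearMap_eq_of_fiberwise_sum_eq {S : Finset E} {cls : E → ι} {u : E}
    (hsum : ∀ i, ∑ v ∈ S with cls v = i, v = u) (hne : ∀ i, ∃ v ∈ S, cls v = i)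
    (hrank : finrank K (span K (S : Set E)) + Fintype.card ι = #S + 1)
    {g : E → K} {c : K} (hg : ∀ i, ∑ v ∈ S with cls v = i, g v = c) :
    ∃ φ : E →ₗ[K] K, ∀ v ∈ S, φ v = g v := by
  classical
  obtain ⟨i₀⟩ := nonempty_of_finrank_span_add_card_eq hrank
  choose a haS hcls using hne
  have ha : ∀ i, a i ∈ {v ∈ S | cls v = i} := fun i => mem_filter.2 ⟨haS i, hcls i⟩
  -- Each `a i` is the sum over the fiber of `i₀` minus the sum over the rest of its own fiber,
  -- and `g` obeys the same relation. So dropping `a i` for all `i ≠ i₀` leaves a spanning set `T`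
  -- of size `finrank K (span K S)`, on which `g` can be prescribed freely.
  set R := {v ∈ S | cls v ≠ i₀ ∧ v = a (cls v)}
  set T := S \ R with hT
  have hT₀ : {v ∈ S | cls v = i₀} ⊆ T := fun v hv => by simp_all [R]
  have hT_erase : ∀ i, {v ∈ S | cls v = i}.erase (a i) ⊆ T := fun i v hv => by
    obtain ⟨hva, hvS, rfl⟩ : v ≠ a i ∧ v ∈ S ∧ cls v = i := by simpa using hv
    simp [hT, R, hvS, hva]
  have hrep : ∀ i,
      a i = ∑ v ∈ S with cls v = i₀, v - ∑ v ∈ {v ∈ S | cls v = i}.erase (a i), v :=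
    fun i => eq_sub_of_add_eq ((add_sum_erase _ _ (ha i)).trans ((hsum i).trans (hsum i₀).symm))
  have hgrep : ∀ i,
      g (a i) = ∑ v ∈ S with cls v = i₀, g v - ∑ v ∈ {v ∈ S | cls v = i}.erase (a i), g v :=
    fun i => eq_sub_of_add_eq ((add_sum_erase _ _ (ha i)).trans ((hg i).trans (hg i₀).symm))
  have hST : ∀ v ∈ S, v ∉ T → v = a (cls v) := fun v hv hvT =>
    (mem_filter.1 (by simpa [hT, hv] using hvT : v ∈ R)).2.2
  have hspan : span K (T : Set E) = span K (S : Set E) := by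
    refine le_antisymm (span_mono (coe_subset.2 sdiff_subset)) (span_le.2 fun v hv => ?_)
    by_cases hvT : v ∈ T
    · exact subset_span hvT
    · rw [hST v hv hvT, hrep]
      exact sub_mem (sum_mem fun w hw => subset_span (hT₀ hw))
        (sum_mem fun w hw => subset_span (hT_erase _ hw))
  have hcard : #T = #S - (Fintype.card ι - 1) := by
    rw [hT, card_sdiff_of_subset (filter_subset _ _), card_filter_eq_section haS hcls]
  have : 0 < Fintype.card ι := Fintype.card_pos_iff.2 ⟨i₀⟩
  obtain ⟨φ, hφ⟩ := exists_linearMap_eq_of_card_le_finrank_span (T := T) (by rw [hspan]; omega) g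
  refine ⟨φ, fun v hv => ?_⟩
  by_cases hvT : v ∈ T
  · exact hφ v hvT
  · rw [hST v hv hvT]
    conv_lhs => rw [hrep]
    rw [hgrep, map_sub, map_sum, map_sum,
      sum_congr rfl fun w hw => hφ w (hT₀ hw), sum_congr rfl fun w hw => hφ w (hT_erase _ hw)]

end LinearAlgebra

section Convexity

variable {𝕜 E : Type*} [Field 𝕜] [LinearOrder 𝕜] [IsStrictOrderedRing 𝕜]
  [AddCommGroup E] [Module 𝕜 E]

theorem notMem_convexHull_of_forall_lt {T : Set E} {x : E} (φ : E →ₗ[𝕜] 𝕜)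
    (h : ∀ v ∈ T, φ v < φ x) : x ∉ convexHull 𝕜 T :=
  fun hx => lt_irrefl _ (convexHull_min h (convex_halfSpace_lt φ.isLinear (φ x)) hx)

theorem isExtreme_inter_hyperplane {A : Set E} (φ : E →ₗ[𝕜] 𝕜) {c : 𝕜}
    (h : ∀ x ∈ A, c ≤ φ x) : IsExtreme 𝕜 A (A ∩ {x | φ x = c}) := by
  refine ⟨Set.inter_subset_left, fun x₁ hx₁ x₂ hx₂ x ⟨_, hx⟩ ⟨a, b, ha, hb, hab, hx_eq⟩ => ?_⟩
  have h₁ := h x₁ hx₁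
  have h₂ := h x₂ hx₂
  have hφx : a * φ x₁ + b * φ x₂ = c := by
    simpa [← hx_eq] using hx
  have hsplit : a * (φ x₁ - c) + b * (φ x₂ - c) = 0 := by linear_combination hφx - c * hab
  have h₁₀ := ((add_eq_zero_iff_of_nonneg (mul_nonneg ha.le (sub_nonneg.2 h₁))
    (mul_nonneg hb.le (sub_nonneg.2 h₂))).1 hsplit).1
  exact ⟨hx₁, by simpa [ha.ne', sub_eq_zero] using h₁₀⟩

theorem convexHull_filter_eq_inter [DecidableEq E] {S : Finset E} (φ : E →ₗ[𝕜] 𝕜) {c : 𝕜}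
    (h : ∀ v ∈ S, c ≤ φ v) :
    convexHull 𝕜 ↑{v ∈ S | φ v = c} = convexHull 𝕜 ↑S ∩ {x | φ x = c} := by
  refine subset_antisymm (Set.subset_inter (convexHull_mono (coe_subset.2 (filter_subset _ _)))
    (convexHull_min (fun v hv => (mem_filter.1 hv).2) (convex_hyperplane φ.isLinear c)))
    fun x ⟨hx, hφx⟩ => ?_
  obtain ⟨w, hw₀, hw₁, rfl⟩ := mem_convexHull'.1 hx
  have hsum : ∑ v ∈ S, w v * (φ v - c) = 0 := by
    simp only [Set.mem_ofPred_eq, map_sum, map_smul, smul_eq_mul] at hφx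
    simp [mul_sub, sum_sub_distrib, ← sum_mul, hw₁, hφx]
  have hzero : ∀ v ∈ S, v ∉ {v ∈ S | φ v = c} → w v = 0 := by
    intro v hv hvF
    have hφv : φ v - c ≠ 0 := sub_ne_zero.2 fun h' => hvF (mem_filter.2 ⟨hv, h'⟩)
    have := (sum_eq_zero_iff_of_nonneg fun v hv => mul_nonneg (hw₀ v hv)
      (sub_nonneg.2 (h v hv))).1 hsum v hv
    exact (mul_eq_zero.1 this).resolve_right hφv
  refine mem_convexHull'.2 ⟨w, fun v hv => hw₀ v (filter_subset _ _ hv), ?_, ?_⟩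
  · rwa [sum_subset (filter_subset _ _) hzero]
  · exact sum_subset (filter_subset _ _) fun v hv hvF => by rw [hzero v hv hvF, zero_smul]

theorem isExtreme_convexHull_filter_eq [DecidableEq E] {S : Finset E} (φ : E →ₗ[𝕜] 𝕜) {c : 𝕜}
    (h : ∀ v ∈ S, c ≤ φ v) :
    IsExtreme 𝕜 (convexHull 𝕜 ↑S) (convexHull 𝕜 (({v ∈ S | φ v = c} : Finset E) : Set E)) := by
  rw [convexHull_filter_eq_inter φ h]
  exact isExtreme_inter_hyperplane φ fun x hx =>
    convexHull_min h (convex_halfSpace_ge φ.isLinear c) hx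

theorem IsExtreme.subset_of_centerMass_mem [DecidableEq E] {A C : Set E} (hAC : IsExtreme 𝕜 A C)
    (hA : Convex 𝕜 A) {B : Finset E} {w : E → 𝕜} (hw : ∀ v ∈ B, 0 < w v) (hBA : ↑B ⊆ A)
    (hC : B.centerMass w id ∈ C) : ↑B ⊆ C := by
  intro x hx
  rw [← insert_erase (mem_coe.1 hx)] at hC
  rcases (B.erase x).eq_empty_or_nonempty with ht | ht
  · rwa [ht, insert_empty, centerMass_singleton _ _ (hw x hx).ne'] at hC
  have hpos : 0 < ∑ v ∈ B.erase x, w v := sum_pos (fun v hv => hw v (mem_of_mem_erase hv)) ht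
  have hx₀ := hw x hx
  have hsum : 0 < w x + ∑ v ∈ B.erase x, w v := add_pos hx₀ hpos
  rw [centerMass_insert (ha := notMem_erase x B) (hw := hpos.ne')] at hC
  refine hAC.left_mem_of_mem_openSegment (hBA hx) (hA.centerMass_mem
    (fun v hv => (hw v (mem_of_mem_erase hv)).le) hpos
    fun v hv => hBA (mem_of_mem_erase hv)) hC ⟨_, _, div_pos hx₀ hsum, div_pos hpos hsum, ?_, rfl⟩
  rw [← add_div, div_self hsum.ne']

end Convexity

section Configuration

variable {𝕜 E ι : Type*} [Field 𝕜] [LinearOrder 𝕜] [IsStrictOrderedRing 𝕜]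
  [AddCommGroup E] [Module 𝕜 E] [Fintype ι] [DecidableEq ι] [DecidableEq E]
  {S : Finset E} {cls : E → ι} {u : E}

theorem notMem_convexHull_erase_of_two_le_card_fiber (hsum : ∀ i, ∑ v ∈ S with cls v = i, v = u)
    (hrank : finrank 𝕜 (span 𝕜 (S : Set E)) + Fintype.card ι = #S + 1)
    (hcard : ∀ i, 2 ≤ #{v ∈ S | cls v = i}) {x : E} (hx : x ∈ S) :
    x ∉ convexHull 𝕜 (S.erase x : Set E) := by
  set g : E → 𝕜 := fun v =>
    if v = x then 1 else if cls v = cls x then 0 else (#{w ∈ S | cls w = cls v} : 𝕜)⁻¹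
  have hgsum : ∀ i, ∑ v ∈ S with cls v = i, g v = 1 := by
    intro i
    by_cases hi : i = cls x
    · subst hi
      rw [sum_eq_single_of_mem x (mem_filter.2 ⟨hx, rfl⟩ : x ∈ {v ∈ S | cls v = cls x})]
      · simp [g]
      · intro v hv hvx
        simp [g, hvx, (mem_filter.1 hv).2]
    · have hpos : (0 : 𝕜) < #{v ∈ S | cls v = i} := by
        have := hcard i
        positivity
      rw [← mul_inv_cancel₀ hpos.ne', ← nsmul_eq_mul, ← sum_const]
      refine sum_congr rfl fun v hv => ?_
      obtain ⟨-, rfl⟩ := mem_filter.1 hv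
      have hvx : v ≠ x := by
        rintro rfl
        exact hi rfl
      simp [g, hvx, hi]
  obtain ⟨φ, hφ⟩ := exists_linearMap_eq_of_fiberwise_sum_eq hsum
    (fun i => (card_pos.1 (two_pos.trans_le (hcard i))).imp fun _ => mem_filter.1) hrank hgsum
  refine notMem_convexHull_of_forall_lt φ fun v hv => ?_
  obtain ⟨hvx, hvS⟩ := mem_erase.1 hv
  rw [hφ v hvS, hφ x hx]
  simp only [g, if_neg hvx, if_pos rfl]
  split_ifs
  · exact one_pos
  · exact inv_lt_one_of_one_lt₀ (by exact_mod_cast hcard (cls v))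

theorem isExtreme_convexHull_of_forall_exists_notMem (hsum : ∀ i, ∑ v ∈ S with cls v = i, v = u)
    (hrank : finrank 𝕜 (span 𝕜 (S : Set E)) + Fintype.card ι = #S + 1) {F : Finset E}
    (hFS : F ⊆ S) (hF : ∀ i, ∃ v ∈ S, cls v = i ∧ v ∉ F) :
    IsExtreme 𝕜 (convexHull 𝕜 (S : Set E)) (convexHull 𝕜 (F : Set E)) := by
  set g : E → 𝕜 := fun v => if v ∈ F then 0 else (#{w ∈ S | cls w = cls v ∧ w ∉ F} : 𝕜)⁻¹
  have hcard_pos : ∀ v ∈ S, v ∉ F → (0 : 𝕜) < #{w ∈ S | cls w = cls v ∧ w ∉ F} := fun v hv hvF =>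
    Nat.cast_pos.2 (card_pos.2 ⟨v, mem_filter.2 ⟨hv, rfl, hvF⟩⟩)
  have hgsum : ∀ i, ∑ v ∈ S with cls v = i, g v = 1 := by
    intro i
    obtain ⟨v, hv, rfl, hvF⟩ := hF i
    have hg_fiber : ∀ w ∈ {w ∈ S | cls w = cls v},
        g w = if w ∈ F then 0 else (#{x ∈ S | cls x = cls v ∧ x ∉ F} : 𝕜)⁻¹ := fun w hw => by
      simp only [g, (mem_filter.1 hw).2]
    rw [sum_congr rfl hg_fiber, sum_ite, sum_const_zero,
      zero_add, sum_const, filter_filter, nsmul_eq_mul, mul_inv_cancel₀ (hcard_pos v hv hvF).ne']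
  obtain ⟨φ, hφ⟩ := exists_linearMap_eq_of_fiberwise_sum_eq hsum
    (fun i => (hF i).imp fun _ h => ⟨h.1, h.2.1⟩) hrank hgsum
  have hφ_nonneg : ∀ v ∈ S, 0 ≤ φ v := fun v hv => by
    rw [hφ v hv]
    simp only [g]
    split_ifs
    exacts [le_rfl, inv_nonneg.2 (Nat.cast_nonneg _)]
  have hF_eq : {v ∈ S | φ v = 0} = F := by
    ext v
    rw [mem_filter]
    refine ⟨fun ⟨hv, hφv⟩ => ?_, fun hvF => ⟨hFS hvF, by simp [hφ v (hFS hvF), g, hvF]⟩⟩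
    by_contra hvF
    rw [hφ v hv] at hφv
    simp only [g, if_neg hvF] at hφv
    exact (inv_pos.2 (hcard_pos v hv hvF)).ne' hφv
  simpa only [hF_eq] using isExtreme_convexHull_filter_eq φ hφ_nonneg

theorem eq_of_isExtreme_of_fiber_subset (hsum : ∀ i, ∑ v ∈ S with cls v = i, v = u)
    (hrank : finrank 𝕜 (span 𝕜 (S : Set E)) + Fintype.card ι = #S + 1) {m : ℕ}
    (hcard : ∀ i, #{v ∈ S | cls v = i} = m) (hm : 2 ≤ m) {F : Finset E} (hFS : F ⊆ S)
    (hext : IsExtreme 𝕜 (convexHull 𝕜 (S : Set E)) (convexHull 𝕜 (F : Set E))) {i : ι}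
    (hi : {v ∈ S | cls v = i} ⊆ F) : F = S := by
  have hcentroid : ∀ j, {v ∈ S | cls v = j}.centerMass (fun _ => (1 : 𝕜)) id = (m : 𝕜)⁻¹ • u := by
    intro j
    simp [centerMass, hcard, hsum]
  refine hFS.antisymm fun x hx => ?_
  by_contra hxF
  have hx_hull : x ∈ convexHull 𝕜 (F : Set E) := by
    refine hext.subset_of_centerMass_mem (convex_convexHull 𝕜 _) (B := {v ∈ S | cls v = cls x})
      (fun _ _ => one_pos) (fun v hv => subset_convexHull 𝕜 _ (filter_subset _ _ hv)) ?_
      (mem_filter.2 ⟨hx, rfl⟩)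
    rw [hcentroid, ← hcentroid i]
    refine convexHull_mono (coe_subset.2 hi) (centerMass_id_mem_convexHull _
      (fun _ _ => zero_le_one) ?_)
    simp only [sum_const, hcard, nsmul_eq_mul, mul_one, Nat.cast_pos]
    omega
  refine notMem_convexHull_erase_of_two_le_card_fiber hsum hrank (fun j => hcard j ▸ hm) hx
    (convexHull_mono (coe_subset.2 fun v hv => mem_erase.2 ⟨?_, hFS hv⟩) hx_hull)
  rintro rfl
  exact hxF hv

theorem isExtreme_convexHull_and_ne_iff (hsum : ∀ i, ∑ v ∈ S with cls v = i, v = u)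
    (hrank : finrank 𝕜 (span 𝕜 (S : Set E)) + Fintype.card ι = #S + 1) {m : ℕ}
    (hcard : ∀ i, #{v ∈ S | cls v = i} = m) (hm : 2 ≤ m) {F : Finset E} (hFS : F ⊆ S) :
    IsExtreme 𝕜 (convexHull 𝕜 (S : Set E)) (convexHull 𝕜 (F : Set E)) ∧ F ≠ S ↔
      ∀ i, ¬ {v ∈ S | cls v = i} ⊆ F := by
  constructor
  · rintro ⟨hext, hne⟩ i hi
    exact hne (eq_of_isExtreme_of_fiber_subset hsum hrank hcard hm hFS hext hi)
  · intro hF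
    refine ⟨isExtreme_convexHull_of_forall_exists_notMem hsum hrank hFS fun i => ?_, ?_⟩
    · obtain ⟨v, hv, hvF⟩ := not_subset.1 (hF i)
      exact ⟨v, (mem_filter.1 hv).1, (mem_filter.1 hv).2, hvF⟩
    · obtain ⟨i⟩ := nonempty_of_finrank_span_add_card_eq (K := 𝕜) hrank
      rintro rfl
      exact hF i (filter_subset _ _)

end Configuration

theorem exists_labelling_of_disjoint_union {E : Type*} [DecidableEq E] {S V₁ V₂ V₃ : Finset E}
    (hunion : V₁ ∪ V₂ ∪ V₃ = S) (h12 : Disjoint V₁ V₂) (h13 : Disjoint V₁ V₃)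
    (h23 : Disjoint V₂ V₃) : ∃ cls : E → Fin 3, ∀ i, {v ∈ S | cls v = i} = ![V₁, V₂, V₃] i := by
  refine ⟨fun v => if v ∈ V₁ then 0 else if v ∈ V₂ then 1 else 2, fun i => ?_⟩
  subst hunion
  have := disjoint_left.1 h12
  have := disjoint_left.1 h13
  have := disjoint_left.1 h23
  fin_cases i <;> ext v <;> by_cases v ∈ V₁ <;> by_cases v ∈ V₂ <;> simp_all

theorem stmt_15_general
    (n : ℕ)
    (S V1 V2 V3 : Finset (Fin (2 * n) → ℝ))
    (hScard : S.card = n + 2)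
    (hunion : V1 ∪ V2 ∪ V3 = S)
    (hd12 : Disjoint V1 V2) (hd13 : Disjoint V1 V3) (hd23 : Disjoint V2 V3)
    (hsum1 : ∑ v ∈ V1, v = fun _ => (1 : ℝ))
    (hsum2 : ∑ v ∈ V2, v = fun _ => (1 : ℝ))
    (hsum3 : ∑ v ∈ V3, v = fun _ => (1 : ℝ))
    (hspan : Module.finrank ℝ (Submodule.span ℝ (S : Set (Fin (2 * n) → ℝ))) = n)
    (hm : 2 ≤ V1.card) (h12 : V1.card = V2.card) (h23 : V2.card = V3.card)
    : ∀ F ⊆ S, F.Nonempty →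
      ((IsExtreme ℝ (convexHull ℝ (S : Set (Fin (2 * n) → ℝ)))
          (convexHull ℝ (F : Set (Fin (2 * n) → ℝ))) ∧ F ≠ S) ↔
        (¬ V1 ⊆ F ∧ ¬ V2 ⊆ F ∧ ¬ V3 ⊆ F)) := by
  classical
  intro F hFS _
  obtain ⟨cls, hcls⟩ := exists_labelling_of_disjoint_union hunion hd12 hd13 hd23
  have hsum : ∀ i, ∑ v ∈ S with cls v = i, v = fun _ => (1 : ℝ) := by
    intro i
    fin_cases i <;> simp [hcls, hsum1, hsum2, hsum3]
  have hcard : ∀ i, #{v ∈ S | cls v = i} = #V1 := by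
    intro i
    fin_cases i <;> simp [hcls, h12, h23]
  have hrank : finrank ℝ (span ℝ (S : Set (Fin (2 * n) → ℝ))) + Fintype.card (Fin 3) = #S + 1 := by
    rw [hspan, hScard, Fintype.card_fin]
  simpa [Fin.forall_fin_succ, hcls] using isExtreme_convexHull_and_ne_iff hsum hrank hcard hm hFS

theorem stmt_15
    (n : ℕ) (hn : 0 < n)
    (S V1 V2 V3 : Finset (Fin (2 * n) → ℝ))
    (h01 : ∀ v ∈ S, ∀ i, v i = 0 ∨ v i = 1)
    (hScard : S.card = n + 2)
    (hunion : V1 ∪ V2 ∪ V3 = S)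
    (hd12 : Disjoint V1 V2) (hd13 : Disjoint V1 V3) (hd23 : Disjoint V2 V3)
    (hne1 : V1.Nonempty) (hne2 : V2.Nonempty) (hne3 : V3.Nonempty)
    (hsum1 : ∑ v ∈ V1, v = fun _ => (1 : ℝ))
    (hsum2 : ∑ v ∈ V2, v = fun _ => (1 : ℝ))
    (hsum3 : ∑ v ∈ V3, v = fun _ => (1 : ℝ))
    (hspan : Module.finrank ℝ (Submodule.span ℝ (S : Set (Fin (2 * n) → ℝ))) = n)
    (hm : 2 ≤ V1.card) (h12 : V1.card = V2.card) (h23 : V2.card = V3.card)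
    : ∀ F ⊆ S, F.Nonempty →
      ((IsExtreme ℝ (convexHull ℝ (S : Set (Fin (2 * n) → ℝ)))
          (convexHull ℝ (F : Set (Fin (2 * n) → ℝ))) ∧ F ≠ S) ↔
        (¬ V1 ⊆ F ∧ ¬ V2 ⊆ F ∧ ¬ V3 ⊆ F)) :=
  stmt_15_general n S V1 V2 V3 hScard hunion hd12 hd13 hd23 hsum1 hsum2 hsum3 hspan hm h12 h23
end

section
/- (Neighborliness, case m₁ = m₂ = m₃ = m ≥ 2) Assume m₁ = m₂ = m₃ = m ≥ 2. Then conv(S) is (m−1)-neighborly: every nonempty subset F ⊆ S with |F| ≤ m − 1 satisfies F ≠ S and the convex hull of F is an extreme subset of the convex hull of S (i.e., F is the vertex set of a proper face of conv(S)). -/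
/-!
The linear dependencies among the points of `S` form a space of dimension `|S| - n = 2`, so they
are spanned by `𝟙_{V₁} - 𝟙_{V₂}` and `𝟙_{V₂} - 𝟙_{V₃}`, which are dependencies because the three
parts have the same sum. Hence every function on `S` with equal sums over the three parts is the
restriction of a linear functional. If `|F| < m`, every part has a point outside `F`, so we may put
`1` on `F` and, on the rest of each part, the nonpositive constant that makes the sum over that
part vanish. The resulting functional is `1` on `F` and `< 1` on `S \ F`, so it exposes `conv F`
as a face of `conv S`.
-/

open Finset Module Submodule

theorem LinearMap.exists_comp_eq_of_ker_le {K V W : Type*} [Field K] [AddCommGroup V]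
    [Module K V] [AddCommGroup W] [Module K W] (f : V →ₗ[K] W) (ψ : V →ₗ[K] K)
    (h : LinearMap.ker f ≤ LinearMap.ker ψ) : ∃ l : W →ₗ[K] K, l ∘ₗ f = ψ :=
  (LinearMap.range_dualMap_eq_dualAnnihilator_ker f ▸
    (mem_dualAnnihilator ψ).2 fun _ hv => h hv : ψ ∈ LinearMap.range f.dualMap)

theorem finrank_ker_fintypeLinearCombination_coe {K E : Type*} [Field K] [AddCommGroup E]
    [Module K E] (S : Finset E) :
    finrank K (LinearMap.ker (Fintype.linearCombination K ((↑) : S → E))) +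
      finrank K (span K (S : Set E)) = #S := by
  have h := (Fintype.linearCombination K ((↑) : S → E)).finrank_range_add_finrank_ker
  rw [Fintype.range_linearCombination, Subtype.range_coe_subtype, Finset.setOfPred_mem,
    finrank_fintype_fun_eq_card, Fintype.card_coe] at h
  omega

section IndicatorDiff

variable (K : Type*) {E : Type*} [Field K] [DecidableEq E]

def indicatorDiff (S A B : Finset E) : S → K :=
  fun v => (if (v : E) ∈ A then 1 else 0) - if (v : E) ∈ B then 1 else 0

variable {K}

theorem sum_indicatorDiff_smul {M : Type*} [AddCommGroup M] [Module K M] {S A B : Finset E}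
    (hA : A ⊆ S) (hB : B ⊆ S) (f : E → M) :
    ∑ v : S, indicatorDiff K S A B v • f v = ∑ v ∈ A, f v - ∑ v ∈ B, f v := by
  refine (Finset.sum_coe_sort S
    fun v => ((if v ∈ A then (1 : K) else 0) - if v ∈ B then 1 else 0) • f v).trans ?_
  simp only [sub_smul, ite_smul, one_smul, zero_smul, Finset.sum_sub_distrib, Finset.sum_ite_mem,
    inter_eq_right.2 hA, inter_eq_right.2 hB]

theorem linearIndependent_indicatorDiff_pair {S V₁ V₂ V₃ : Finset E} (hd₁₂ : Disjoint V₁ V₂)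
    (hd₁₃ : Disjoint V₁ V₃) (hd₂₃ : Disjoint V₂ V₃) {u₁ u₃ : E} (hu₁ : u₁ ∈ V₁) (hu₃ : u₃ ∈ V₃)
    (hu₁S : u₁ ∈ S) (hu₃S : u₃ ∈ S) :
    LinearIndependent K ![indicatorDiff K S V₁ V₂, indicatorDiff K S V₂ V₃] := by
  rw [LinearIndependent.pair_iff]
  intro s t hst
  have h₁ := congrFun hst ⟨u₁, hu₁S⟩
  have h₃ := congrFun hst ⟨u₃, hu₃S⟩
  simp [indicatorDiff, hu₁, hu₃, disjoint_left.1 hd₁₂ hu₁, disjoint_left.1 hd₁₃ hu₁,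
    disjoint_right.1 hd₁₃ hu₃, disjoint_right.1 hd₂₃ hu₃] at h₁ h₃
  exact ⟨h₁, h₃⟩

end IndicatorDiff

theorem exists_linearMap_eq_of_sum_eq {K E : Type*} [Field K] [AddCommGroup E] [Module K E]
    [DecidableEq E] {S V₁ V₂ V₃ : Finset E} (h₁ : V₁ ⊆ S) (h₂ : V₂ ⊆ S) (h₃ : V₃ ⊆ S)
    (hd₁₂ : Disjoint V₁ V₂) (hd₁₃ : Disjoint V₁ V₃) (hd₂₃ : Disjoint V₂ V₃)
    (hne₁ : V₁.Nonempty) (hne₃ : V₃.Nonempty)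
    (hsum₁₂ : ∑ v ∈ V₁, v = ∑ v ∈ V₂, v) (hsum₂₃ : ∑ v ∈ V₂, v = ∑ v ∈ V₃, v)
    (hrank : finrank K (span K (S : Set E)) + 2 = #S)
    (g : E → K) (hg₁₂ : ∑ v ∈ V₁, g v = ∑ v ∈ V₂, g v) (hg₂₃ : ∑ v ∈ V₂, g v = ∑ v ∈ V₃, g v) :
    ∃ l : E →ₗ[K] K, ∀ v ∈ S, l v = g v := by
  have hdim := finrank_ker_fintypeLinearCombination_coe (K := K) S
  set e := Fintype.linearCombination K ((↑) : S → E)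
  set ψ := Fintype.linearCombination K fun v : S => g v
  set r := ![indicatorDiff K S V₁ V₂, indicatorDiff K S V₂ V₃]
  have hdep : ∀ {A B : Finset E}, A ⊆ S → B ⊆ S → ∑ v ∈ A, v = ∑ v ∈ B, v →
      ∑ v ∈ A, g v = ∑ v ∈ B, g v → indicatorDiff K S A B ∈ LinearMap.ker e ⊓ LinearMap.ker ψ :=
    fun hA hB hv hg => ⟨(sum_indicatorDiff_smul hA hB id).trans (sub_eq_zero.2 hv),
      (sum_indicatorDiff_smul hA hB g).trans (sub_eq_zero.2 hg)⟩
  have hr_ker : ∀ i, r i ∈ LinearMap.ker e ⊓ LinearMap.ker ψ := by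
    intro i
    fin_cases i
    exacts [hdep h₁ h₂ hsum₁₂ hg₁₂, hdep h₂ h₃ hsum₂₃ hg₂₃]
  have hker : LinearMap.ker e = span K (Set.range r) := by
    obtain ⟨u₁, hu₁⟩ := hne₁
    obtain ⟨u₃, hu₃⟩ := hne₃
    have hind := linearIndependent_indicatorDiff_pair (K := K) hd₁₂ hd₁₃ hd₂₃ hu₁ hu₃
      (h₁ hu₁) (h₃ hu₃)
    refine (eq_of_le_of_finrank_le (span_le.2 ?_) ?_).symm
    · rintro _ ⟨i, rfl⟩; exact (hr_ker i).1
    · rw [finrank_span_eq_card hind, Fintype.card_fin]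
      omega
  obtain ⟨l, hl⟩ := LinearMap.exists_comp_eq_of_ker_le e ψ <| hker ▸ span_le.2 <| by
    rintro _ ⟨i, rfl⟩; exact (hr_ker i).2
  refine ⟨l, fun v hv => ?_⟩
  simpa [e, ψ, Fintype.linearCombination_apply_single] using
    LinearMap.congr_fun hl (Pi.single ⟨v, hv⟩ 1)

section Face

variable {𝕜 E : Type*} [Field 𝕜] [LinearOrder 𝕜] [IsStrictOrderedRing 𝕜]
  [AddCommGroup E] [Module 𝕜 E] {S F : Finset E} {l : E →ₗ[𝕜] 𝕜}

theorem mem_convexHull_of_map_eq_one (hFS : F ⊆ S) (hF : ∀ v ∈ F, l v = 1)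
    (hS : ∀ v ∈ S, v ∉ F → l v < 1) {x : E} (hx : x ∈ convexHull 𝕜 (S : Set E))
    (hlx : l x = 1) : x ∈ convexHull 𝕜 (F : Set E) := by
  obtain ⟨w, hw₀, hw₁, rfl⟩ := Finset.mem_convexHull.1 hx
  have hzero : ∀ v ∈ S, v ∉ F → w v = 0 := by
    by_contra! ⟨v, hv, hvF, hwv⟩
    have hlt : ∑ u ∈ S, w u * l u < ∑ u ∈ S, w u := by
      refine Finset.sum_lt_sum (fun u hu => ?_) ⟨v, hv, ?_⟩
      · by_cases huF : u ∈ F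
        · rw [hF u huF, mul_one]
        · exact mul_le_of_le_one_right (hw₀ u hu) (hS u hu huF).le
      · exact mul_lt_of_lt_one_right ((hw₀ v hv).lt_of_ne' hwv) (hS v hv hvF)
    rw [Finset.centerMass_eq_of_sum_1 _ _ hw₁, map_sum] at hlx
    simp only [id, map_smul, smul_eq_mul] at hlx
    linarith
  have hw₁F : ∑ v ∈ F, w v = 1 := by rwa [Finset.sum_subset hFS hzero]
  rw [← Finset.centerMass_subset id hFS hzero]
  exact F.centerMass_mem_convexHull (fun v hv => hw₀ v (hFS hv)) (by rw [hw₁F]; exact one_pos)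
    fun v hv => hv

theorem isExtreme_convexHull_of_map_eq_one (hFS : F ⊆ S) (hF : ∀ v ∈ F, l v = 1)
    (hS : ∀ v ∈ S, v ∉ F → l v < 1) :
    IsExtreme 𝕜 (convexHull 𝕜 (S : Set E)) (convexHull 𝕜 (F : Set E)) where
  subset := convexHull_mono (coe_subset.2 hFS)
  left_mem_of_mem_openSegment y hy z hz x hx hxyz := by
    have hle : ∀ y ∈ convexHull 𝕜 (S : Set E), l y ≤ 1 :=
      fun y hy => convexHull_min (fun v hv => (em (v ∈ F)).elim (fun h => (hF v h).le)
        fun h => (hS v hv h).le) (convex_halfSpace_le l.isLinear 1) hy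
    have hlx : l x = 1 := convexHull_min hF (convex_hyperplane l.isLinear 1) hx
    obtain ⟨a, b, ha, hb, hab, rfl⟩ := hxyz
    refine mem_convexHull_of_map_eq_one hFS hF hS hy ?_
    rw [map_add, map_smul, map_smul, smul_eq_mul, smul_eq_mul] at hlx
    nlinarith [hle y hy, hle z hz]

end Face

section Balancing

variable {𝕜 E : Type*} [Field 𝕜] [LinearOrder 𝕜] [IsStrictOrderedRing 𝕜] [DecidableEq E]

def balancingValue (F W : Finset E) : 𝕜 := -(#(W ∩ F) : 𝕜) / #(W \ F)

theorem balancingValue_nonpos (F W : Finset E) : balancingValue F W ≤ (0 : 𝕜) := by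
  rw [balancingValue, neg_div, neg_nonpos]
  positivity

theorem sum_ite_mem_balancingValue {F W : Finset E} (h : (W \ F).Nonempty) :
    ∑ v ∈ W, (if v ∈ F then 1 else balancingValue F W : 𝕜) = 0 := by
  have hcard : (#(W \ F) : 𝕜) ≠ 0 := Nat.cast_ne_zero.2 h.card_pos.ne'
  rw [Finset.sum_ite, sum_const, sum_const, nsmul_eq_mul, nsmul_eq_mul, mul_one,
    filter_mem_eq_inter, filter_notMem_eq_sdiff, balancingValue]
  field_simp
  ring

theorem exists_eq_one_on_lt_one_off_sum_eq_zero {F V₁ V₂ V₃ : Finset E} (hd₁₂ : Disjoint V₁ V₂)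
    (hd₁₃ : Disjoint V₁ V₃) (hd₂₃ : Disjoint V₂ V₃) (h₁ : (V₁ \ F).Nonempty)
    (h₂ : (V₂ \ F).Nonempty) (h₃ : (V₃ \ F).Nonempty) :
    ∃ g : E → 𝕜, (∀ v ∈ F, g v = 1) ∧ (∀ v ∉ F, g v < 1) ∧
      ∑ v ∈ V₁, g v = 0 ∧ ∑ v ∈ V₂, g v = 0 ∧ ∑ v ∈ V₃, g v = 0 := by
  refine ⟨fun v => if v ∈ F then 1 else if v ∈ V₁ then balancingValue F V₁
      else if v ∈ V₂ then balancingValue F V₂ else balancingValue F V₃,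
    fun v hv => if_pos hv, fun v hv => ?_, ?_, ?_, ?_⟩
  · simp only [if_neg hv]
    split_ifs <;> exact (balancingValue_nonpos _ _).trans_lt one_pos
  · rw [← sum_ite_mem_balancingValue h₁]
    exact sum_congr rfl fun v hv => by simp [hv]
  · rw [← sum_ite_mem_balancingValue h₂]
    exact sum_congr rfl fun v hv => by simp [hv, disjoint_right.1 hd₁₂ hv]
  · rw [← sum_ite_mem_balancingValue h₃]
    exact sum_congr rfl fun v hv => by
      simp [disjoint_right.1 hd₁₃ hv, disjoint_right.1 hd₂₃ hv]

end Balancing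

theorem stmt_17_general
    (n : ℕ)
    (S V1 V2 V3 : Finset (Fin (2 * n) → ℝ))
    (hScard : S.card = n + 2)
    (hunion : V1 ∪ V2 ∪ V3 = S)
    (hd12 : Disjoint V1 V2) (hd13 : Disjoint V1 V3) (hd23 : Disjoint V2 V3)
    (hsum1 : ∑ v ∈ V1, v = fun _ => (1 : ℝ))
    (hsum2 : ∑ v ∈ V2, v = fun _ => (1 : ℝ))
    (hsum3 : ∑ v ∈ V3, v = fun _ => (1 : ℝ))
    (hspan : Module.finrank ℝ (Submodule.span ℝ (S : Set (Fin (2 * n) → ℝ))) = n)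
    (h12 : V1.card = V2.card) (h23 : V2.card = V3.card)
    : ∀ F ⊆ S, F.Nonempty → F.card ≤ V2.card - 1 →
      F ≠ S ∧
      IsExtreme ℝ (convexHull ℝ (S : Set (Fin (2 * n) → ℝ)))
        (convexHull ℝ (F : Set (Fin (2 * n) → ℝ))) := by
  classical
  intro F hFS hFne hFcard
  have hF : #F < #V2 := by have := hFne.card_pos; omega
  have hV₁ : V1 ⊆ S := hunion ▸ subset_union_left.trans subset_union_left
  have hV₂ : V2 ⊆ S := hunion ▸ subset_union_right.trans subset_union_left
  have hV₃ : V3 ⊆ S := hunion ▸ subset_union_right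
  have hout : ∀ {W : Finset (Fin (2 * n) → ℝ)}, #F < #W → (W \ F).Nonempty :=
    fun h => sdiff_nonempty.2 fun hW => (card_le_card hW).not_gt h
  have hout₁ := hout (h12 ▸ hF)
  have hout₃ := hout (h23 ▸ hF)
  obtain ⟨g, hgF, hg_lt, hg₁, hg₂, hg₃⟩ := exists_eq_one_on_lt_one_off_sum_eq_zero (𝕜 := ℝ)
    hd12 hd13 hd23 hout₁ (hout hF) hout₃
  obtain ⟨l, hl⟩ := exists_linearMap_eq_of_sum_eq hV₁ hV₂ hV₃ hd12 hd13 hd23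
    (hout₁.mono sdiff_subset) (hout₃.mono sdiff_subset)
    (hsum1.trans hsum2.symm) (hsum2.trans hsum3.symm) (by omega) g
    (hg₁.trans hg₂.symm) (hg₂.trans hg₃.symm)
  refine ⟨fun hFeq => (card_le_card (hFeq ▸ hV₂)).not_gt hF,
    isExtreme_convexHull_of_map_eq_one hFS (fun v hv => (hl v (hFS hv)).trans (hgF v hv))
      fun v hv hvF => (hl v hv).trans_lt (hg_lt v hvF)⟩

theorem stmt_17
    (n : ℕ) (hn : 0 < n)
    (S V1 V2 V3 : Finset (Fin (2 * n) → ℝ))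
    (h01 : ∀ v ∈ S, ∀ i, v i = 0 ∨ v i = 1)
    (hScard : S.card = n + 2)
    (hunion : V1 ∪ V2 ∪ V3 = S)
    (hd12 : Disjoint V1 V2) (hd13 : Disjoint V1 V3) (hd23 : Disjoint V2 V3)
    (hne1 : V1.Nonempty) (hne2 : V2.Nonempty) (hne3 : V3.Nonempty)
    (hsum1 : ∑ v ∈ V1, v = fun _ => (1 : ℝ))
    (hsum2 : ∑ v ∈ V2, v = fun _ => (1 : ℝ))
    (hsum3 : ∑ v ∈ V3, v = fun _ => (1 : ℝ))
    (hspan : Module.finrank ℝ (Submodule.span ℝ (S : Set (Fin (2 * n) → ℝ))) = n)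
    (hm : 2 ≤ V1.card) (h12 : V1.card = V2.card) (h23 : V2.card = V3.card)
    : ∀ F ⊆ S, F.Nonempty → F.card ≤ V2.card - 1 →
      F ≠ S ∧
      IsExtreme ℝ (convexHull ℝ (S : Set (Fin (2 * n) → ℝ)))
        (convexHull ℝ (F : Set (Fin (2 * n) → ℝ))) :=
  stmt_17_general n S V1 V2 V3 hScard hunion hd12 hd13 hd23 hsum1 hsum2 hsum3 hspan h12 h23
end

section
/- (Pyramid structure of the facet complex of Q, case m₁ = m₂ = m₃ ≥ 2) Assume m₁ = m₂ = m₃ ≥ 2 and let w ∈ V₁, and set Q = conv(S ∖ {w}). Then for every v ∈ V₁ ∖ {w}, the point v does not belong to the affine span of S ∖ {w, v}; hence Q is an (m₁−1)-fold pyramid whose apexes are the points of V₁ ∖ {w}. -/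
/-!
The linear relations among the points of `S` form the kernel of `(c_u) ↦ ∑ c_u • u`, which has
dimension `|S| - dim span S = 2`. Since the three blocks have equal sums, `𝟙_{V₁} - 𝟙_{V₂}` and
`𝟙_{V₁} - 𝟙_{V₃}` are two independent relations, so they span all relations, and every relation is
constant on `V₁`. If `v` were in the (even linear) span of `S \ {w, v}`, writing `v` in terms of
those points would give a relation with coefficient `1` at `v` and `0` at `w`.
-/

open Module Submodule

variable {K E : Type*} [Field K] [AddCommGroup E] [Module K E]

theorem finrank_ker_fintypeLinearCombination_add_finrank_span {ι : Type*} [Fintype ι]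
    (f : ι → E) :
    finrank K (LinearMap.ker (Fintype.linearCombination K f)) + finrank K (span K (Set.range f)) =
      Fintype.card ι := by
  rw [← Fintype.range_linearCombination, add_comm, LinearMap.finrank_range_add_finrank_ker,
    Module.finrank_fintype_fun_eq_card]

theorem notMem_span_image_compl_pair {ι : Type*} [Fintype ι] [DecidableEq ι] {f : ι → E}
    {i j : ι} (hij : i ≠ j)
    (h : ∀ c ∈ LinearMap.ker (Fintype.linearCombination K f), c i = c j) :
    f i ∉ span K (f '' {i, j}ᶜ) := by
  intro hi
  obtain ⟨l, hl, hli⟩ := Finsupp.mem_span_image_iff_linearCombination K |>.1 hi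
  have hl0 : ∀ k ∈ ({i, j} : Set ι), l k = 0 := fun k hk =>
    Finsupp.notMem_support_iff.1 fun hk' => (Finsupp.mem_supported K l).1 hl hk' hk
  have hrel : Pi.single i 1 - ⇑l ∈ LinearMap.ker (Fintype.linearCombination K f) := by
    rw [LinearMap.mem_ker, map_sub, Fintype.linearCombination_apply_single, one_smul,
      ← Finsupp.linearCombination_eq_fintype_linearCombination_apply]
    simpa [sub_eq_zero] using hli.symm
  have := h _ hrel
  simp [hl0 i (by simp), hl0 j (by simp), hij.symm] at this

theorem Submodule.eq_span_pair_of_finrank_eq_two {V : Type*} [AddCommGroup V] [Module K V]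
    [FiniteDimensional K V] {P : Submodule K V} (hP : finrank K P = 2) {x y : V} (hx : x ∈ P)
    (hy : y ∈ P) (hxy : LinearIndependent K ![x, y]) : P = span K {x, y} := by
  refine (eq_of_le_of_finrank_le (span_le.2 (Set.insert_subset hx (by simpa using hy))) ?_).symm
  rw [hP, ← Matrix.range_cons_cons_empty, finrank_span_eq_card hxy, Fintype.card_fin]

theorem fintypeLinearCombination_coe_ite_mem [DecidableEq E] {S V : Finset E} (hV : V ⊆ S) :
    Fintype.linearCombination K ((↑) : S → E) (fun x => if (x : E) ∈ V then 1 else 0) =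
      ∑ u ∈ V, u := by
  rw [Fintype.linearCombination_apply,
    Finset.sum_coe_sort S (fun u => (if u ∈ V then (1 : K) else 0) • u)]
  simp only [ite_smul, one_smul, zero_smul, Finset.sum_ite_mem, Finset.inter_eq_right.2 hV]

theorem apply_eq_of_mem_ker_of_three_blocks [DecidableEq E] {S V₁ V₂ V₃ : Finset E}
    (hunion : V₁ ∪ V₂ ∪ V₃ = S) (h₁₂ : Disjoint V₁ V₂) (h₁₃ : Disjoint V₁ V₃)
    (h₂₃ : Disjoint V₂ V₃) (hne₂ : V₂.Nonempty) (hne₃ : V₃.Nonempty)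
    (hsum₂ : ∑ u ∈ V₁, u = ∑ u ∈ V₂, u) (hsum₃ : ∑ u ∈ V₁, u = ∑ u ∈ V₃, u)
    (hrank : finrank K (span K (S : Set E)) + 2 = S.card)
    {c : S → K} (hc : c ∈ LinearMap.ker (Fintype.linearCombination K ((↑) : S → E)))
    {x y : S} (hx : (x : E) ∈ V₁) (hy : (y : E) ∈ V₁) : c x = c y := by
  let ind (V : Finset E) : S → K := fun x => if (x : E) ∈ V then 1 else 0
  have hsub₁ : V₁ ⊆ S := hunion ▸ Finset.subset_union_left.trans Finset.subset_union_left
  have hsub₂ : V₂ ⊆ S := hunion ▸ Finset.subset_union_right.trans Finset.subset_union_left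
  have hsub₃ : V₃ ⊆ S := hunion ▸ Finset.subset_union_right
  have hker {V : Finset E} (hV : V ⊆ S) (hsum : ∑ u ∈ V₁, u = ∑ u ∈ V, u) :
      ind V₁ - ind V ∈ LinearMap.ker (Fintype.linearCombination K ((↑) : S → E)) := by
    rw [LinearMap.mem_ker, map_sub, fintypeLinearCombination_coe_ite_mem hsub₁,
      fintypeLinearCombination_coe_ite_mem hV, hsum, sub_self]
  have hdim : finrank K (LinearMap.ker (Fintype.linearCombination K ((↑) : S → E))) = 2 := by
    have := finrank_ker_fintypeLinearCombination_add_finrank_span (K := K) ((↑) : S → E)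
    rw [Subtype.range_coe_subtype, Finset.setOfPred_mem, Fintype.card_coe] at this
    omega
  obtain ⟨x₂, hx₂⟩ := hne₂
  obtain ⟨x₃, hx₃⟩ := hne₃
  have hli : LinearIndependent K ![ind V₁ - ind V₂, ind V₁ - ind V₃] := by
    rw [LinearIndependent.pair_iff]
    intro s t hst
    constructor
    · simpa [ind, hx₂, Finset.disjoint_right.1 h₁₂ hx₂, Finset.disjoint_left.1 h₂₃ hx₂] using
        congrFun hst ⟨x₂, hsub₂ hx₂⟩
    · simpa [ind, hx₃, Finset.disjoint_right.1 h₁₃ hx₃, Finset.disjoint_right.1 h₂₃ hx₃] using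
        congrFun hst ⟨x₃, hsub₃ hx₃⟩
  rw [Submodule.eq_span_pair_of_finrank_eq_two hdim (hker hsub₂ hsum₂) (hker hsub₃ hsum₃) hli,
    mem_span_pair] at hc
  obtain ⟨a, b, rfl⟩ := hc
  simp [ind, hx, hy, Finset.disjoint_left.1 h₁₂ hx, Finset.disjoint_left.1 h₁₂ hy,
    Finset.disjoint_left.1 h₁₃ hx, Finset.disjoint_left.1 h₁₃ hy]

theorem stmt_18_general
    (n : ℕ)
    (S V1 V2 V3 : Finset (Fin (2 * n) → ℝ))
    (hScard : S.card = n + 2)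
    (hunion : V1 ∪ V2 ∪ V3 = S)
    (hd12 : Disjoint V1 V2) (hd13 : Disjoint V1 V3) (hd23 : Disjoint V2 V3)
    (hne2 : V2.Nonempty) (hne3 : V3.Nonempty)
    (hsum1 : ∑ v ∈ V1, v = fun _ => (1 : ℝ))
    (hsum2 : ∑ v ∈ V2, v = fun _ => (1 : ℝ))
    (hsum3 : ∑ v ∈ V3, v = fun _ => (1 : ℝ))
    (hspan : Module.finrank ℝ (Submodule.span ℝ (S : Set (Fin (2 * n) → ℝ))) = n)
    : ∀ w ∈ V1, ∀ v ∈ V1 \ {w},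
      v ∉ affineSpan ℝ ((S \ {w, v} : Finset (Fin (2 * n) → ℝ)) : Set (Fin (2 * n) → ℝ)) := by
  intro w hw v hv
  obtain ⟨hv1, hvw⟩ : v ∈ V1 ∧ v ≠ w := by simpa using hv
  have hsub : V1 ⊆ S := hunion ▸ Finset.subset_union_left.trans Finset.subset_union_left
  have hrank : Module.finrank ℝ (Submodule.span ℝ (S : Set (Fin (2 * n) → ℝ))) + 2 = S.card := by
    rw [hspan, hScard]
  have hne : (⟨v, hsub hv1⟩ : S) ≠ ⟨w, hsub hw⟩ := by simpa using hvw
  have hrel : ∀ c ∈ LinearMap.ker (Fintype.linearCombination ℝ ((↑) : S → Fin (2 * n) → ℝ)),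
      c ⟨v, hsub hv1⟩ = c ⟨w, hsub hw⟩ := fun c hc =>
    apply_eq_of_mem_ker_of_three_blocks hunion hd12 hd13 hd23 hne2 hne3
      (hsum1.trans hsum2.symm) (hsum1.trans hsum3.symm) hrank hc hv1 hw
  have himage : ((↑) : S → Fin (2 * n) → ℝ) '' {⟨v, hsub hv1⟩, ⟨w, hsub hw⟩}ᶜ =
      ((S \ {w, v} : Finset _) : Set (Fin (2 * n) → ℝ)) := by
    ext u
    simp only [Set.mem_image, Set.mem_compl_iff, Set.mem_insert_iff, Set.mem_singleton_iff,
      Finset.coe_sdiff, Set.mem_sdiff, Finset.mem_coe, Finset.coe_insert, Finset.coe_singleton,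
      Subtype.exists, Subtype.mk.injEq, exists_and_right, exists_eq_right, exists_prop]
    tauto
  intro h
  exact notMem_span_image_compl_pair hne hrel (himage ▸ affineSpan_subset_span h)

theorem stmt_18
    (n : ℕ) (hn : 0 < n)
    (S V1 V2 V3 : Finset (Fin (2 * n) → ℝ))
    (h01 : ∀ v ∈ S, ∀ i, v i = 0 ∨ v i = 1)
    (hScard : S.card = n + 2)
    (hunion : V1 ∪ V2 ∪ V3 = S)
    (hd12 : Disjoint V1 V2) (hd13 : Disjoint V1 V3) (hd23 : Disjoint V2 V3)
    (hne1 : V1.Nonempty) (hne2 : V2.Nonempty) (hne3 : V3.Nonempty)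
    (hsum1 : ∑ v ∈ V1, v = fun _ => (1 : ℝ))
    (hsum2 : ∑ v ∈ V2, v = fun _ => (1 : ℝ))
    (hsum3 : ∑ v ∈ V3, v = fun _ => (1 : ℝ))
    (hspan : Module.finrank ℝ (Submodule.span ℝ (S : Set (Fin (2 * n) → ℝ))) = n)
    (hm : 2 ≤ V1.card) (h12 : V1.card = V2.card) (h23 : V2.card = V3.card)
    : ∀ w ∈ V1, ∀ v ∈ V1 \ {w},
      v ∉ affineSpan ℝ ((S \ {w, v} : Finset (Fin (2 * n) → ℝ)) : Set (Fin (2 * n) → ℝ)) :=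
  stmt_18_general n S V1 V2 V3 hScard hunion hd12 hd13 hd23 hne2 hne3 hsum1 hsum2 hsum3 hspan
end
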